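/- Let r ≥ 4 and i ≥ 2 be integers, and suppose s is a positive integer satisfying binom(i+1,2)·s ≥ binom(r+i,i) − (i+1). Then the inequality (4s/(r−2))·(s+1)^3 ≥ i·s holds. -/

import Mathlib

/-!
Put `t = s + 1` and `C = binom(r+i, i)`. Since `i + 1 ≤ binom(i+1, 2)`, the hypothesis gives
`C ≤ binom(i+1, 2) t`, while monotonicity of `binom(r+i, i)` in `r` and in `i` gives
`C ≥ binom(i+4, 4)` and `C ≥ binom(r+2, 2)`. The first lower bound yields `i ≤ 2t`, the product
of the two yields `r - 2 ≤ 2t²`, hence `i (r - 2) ≤ 4t³`, which is the claim after multiplying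
by `s / (r - 2)`.
-/

theorem choose_add_le_choose_add {k j r i : ℕ} (hk : k ≤ r) (hj : j ≤ i) :
    (k + j).choose j ≤ (r + i).choose i :=
  calc (k + j).choose j ≤ (r + j).choose j := Nat.choose_le_choose j (by omega)
    _ = (j + r).choose r := by rw [add_comm, Nat.choose_symm_add]
    _ ≤ (i + r).choose r := Nat.choose_le_choose r (by omega)
    _ = (r + i).choose i := by rw [add_comm, Nat.choose_symm_add]

theorem add_one_choose_two_mul (n : ℕ) : (n + 1).choose 2 * 2 = (n + 1) * n := by
  simpa using (Nat.add_one_mul_choose_eq n 1).symm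

theorem add_four_choose_four_mul (n : ℕ) :
    (n + 4).choose 4 * 24 = (n + 4) * (n + 3) * (n + 2) * (n + 1) := by
  rw [show 24 = Nat.factorial 4 from rfl, mul_comm, ← Nat.descFactorial_eq_factorial_mul_choose]
  simp [Nat.descFactorial_succ]
  ring

theorem le_two_mul_of_choose_four_le {i t : ℕ} (h : (i + 4).choose 4 ≤ (i + 1).choose 2 * t) :
    i ≤ 2 * t := by
  rcases Nat.eq_zero_or_pos i with rfl | hi
  · omega
  have key : (i + 1) * i * (6 * i) ≤ (i + 1) * i * (12 * t) :=
    calc (i + 1) * i * (6 * i) ≤ (i + 4) * (i + 3) * (i + 2) * (i + 1) := by ring_nf; omega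
      _ = (i + 4).choose 4 * 24 := (add_four_choose_four_mul i).symm
      _ ≤ (i + 1).choose 2 * t * 24 := Nat.mul_le_mul_right 24 h
      _ = (i + 1) * i * (12 * t) := by rw [← add_one_choose_two_mul]; ring
  have := Nat.le_of_mul_le_mul_left key (by positivity)
  omega

theorem sub_two_le_two_mul_sq_of_choose_le {r i t : ℕ}
    (h : (r + 2).choose 2 * (i + 4).choose 4 ≤ ((i + 1).choose 2 * t) ^ 2) :
    r - 2 ≤ 2 * t ^ 2 := by
  rcases Nat.eq_zero_or_pos i with rfl | hi
  · exact absurd (Nat.le_zero.mp (by simpa using h)) (Nat.choose_pos (by omega)).ne'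
  have hr : 6 * r ≤ (r + 2) * (r + 1) + 12 := by zify; nlinarith [sq_nonneg ((r : ℤ) - 2)]
  have hi4 : (i + 1) ^ 2 * i ^ 2 ≤ (i + 4) * (i + 3) * (i + 2) * (i + 1) := by ring_nf; omega
  have key : (i + 1) ^ 2 * i ^ 2 * (6 * r) ≤ (i + 1) ^ 2 * i ^ 2 * (12 * t ^ 2 + 12) :=
    calc (i + 1) ^ 2 * i ^ 2 * (6 * r)
        ≤ (i + 1) ^ 2 * i ^ 2 * ((r + 2) * (r + 1) + 12) := Nat.mul_le_mul_left _ hr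
      _ = (r + 2) * (r + 1) * ((i + 1) ^ 2 * i ^ 2) + 12 * ((i + 1) ^ 2 * i ^ 2) := by ring
      _ ≤ (r + 2) * (r + 1) * ((i + 4) * (i + 3) * (i + 2) * (i + 1))
            + 12 * ((i + 1) ^ 2 * i ^ 2) := by gcongr
      _ = (r + 2).choose 2 * (i + 4).choose 4 * 48 + 12 * ((i + 1) ^ 2 * i ^ 2) := by
          rw [← add_four_choose_four_mul, ← add_one_choose_two_mul]; ring
      _ ≤ ((i + 1).choose 2 * t) ^ 2 * 48 + 12 * ((i + 1) ^ 2 * i ^ 2) := by gcongr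
      _ = 12 * ((i + 1).choose 2 * 2) ^ 2 * t ^ 2 + 12 * ((i + 1) ^ 2 * i ^ 2) := by ring
      _ = (i + 1) ^ 2 * i ^ 2 * (12 * t ^ 2 + 12) := by rw [add_one_choose_two_mul]; ring
  have := Nat.le_of_mul_le_mul_left key (by positivity)
  omega

theorem stmt_5_general (r i s : ℕ) (hr : 4 ≤ r) (hi : 2 ≤ i)
    (hge : ((i + 1).choose 2) * s + (i + 1) ≥ (r + i).choose i) :
    (4 * (s : ℚ) / ((r : ℚ) - 2)) * ((s : ℚ) + 1) ^ 3 ≥ (i : ℚ) * (s : ℚ) := by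
  have hup : (r + i).choose i ≤ (i + 1).choose 2 * (s + 1) := by
    have : i + 1 ≤ (i + 1).choose 2 := by nlinarith [add_one_choose_two_mul i]
    rw [mul_add_one]
    omega
  have h4 : (i + 4).choose 4 ≤ (r + i).choose i := by
    rw [← Nat.choose_symm_add, add_comm]
    exact choose_add_le_choose_add hr le_rfl
  have h2 : (r + 2).choose 2 ≤ (r + i).choose i := choose_add_le_choose_add le_rfl hi
  have hi_le : i ≤ 2 * (s + 1) := le_two_mul_of_choose_four_le (h4.trans hup)
  have hr_le : r - 2 ≤ 2 * (s + 1) ^ 2 :=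
    sub_two_le_two_mul_sq_of_choose_le <| by
      rw [sq]; exact Nat.mul_le_mul (h2.trans hup) (h4.trans hup)
  have hprod : i * (r - 2) ≤ 4 * (s + 1) ^ 3 :=
    calc i * (r - 2) ≤ 2 * (s + 1) * (2 * (s + 1) ^ 2) := Nat.mul_le_mul hi_le hr_le
      _ = 4 * (s + 1) ^ 3 := by ring
  have hq : (i : ℚ) * ((r : ℚ) - 2) ≤ 4 * ((s : ℚ) + 1) ^ 3 := by
    have := (Nat.cast_le (α := ℚ)).mpr hprod
    push_cast [Nat.cast_sub (show 2 ≤ r by omega)] at this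
    exact this
  have hr2 : (0 : ℚ) < (r : ℚ) - 2 := by
    have : (4 : ℚ) ≤ r := by exact_mod_cast hr
    linarith
  rw [ge_iff_le, div_mul_eq_mul_div, le_div_iff₀ hr2]
  nlinarith [mul_le_mul_of_nonneg_left hq (Nat.cast_nonneg (α := ℚ) s)]

/-- If `r ≥ 4`, `i ≥ 2` and `s ≥ 1` is an integer with
`binom(i+1,2) s + (i+1) ≥ binom(r+i,i)`, then `(4s/(r-2))(s+1)^3 ≥ i s`. -/
theorem stmt_5 (r i s : ℕ) (hr : 4 ≤ r) (hi : 2 ≤ i) (hs : 1 ≤ s)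
    (hge : ((i + 1).choose 2) * s + (i + 1) ≥ (r + i).choose i) :
    (4 * (s : ℚ) / ((r : ℚ) - 2)) * ((s : ℚ) + 1) ^ 3 ≥ (i : ℚ) * (s : ℚ) :=
  stmt_5_general r i s hr hi hge
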